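/- For every DTMC M, every state s of M, every rPCTL* path formula Φ, and every truth value t ∈ B4, the set {π ∈ Paths(M,s) : V_M(π, Φ) ⪰ t} is measurable with respect to the σ-algebra on Paths(M,s) generated by the cylinder sets (so that the semantics of the probabilistic operator P_{∼λ}[Φ] is well defined). -/
import Mathlib


open MeasureTheory
open scoped Classical ENNReal NNReal

/-! ### Discrete-time Markov chains, paths, cylinder sets -/

/-- A discrete-time Markov chain over atomic propositions `AP` with a finite
state set `S`, an initial state, a stochastic transition function with values
in `[0,1]`, and a labeling function. -/
structure DTMC (AP : Type) (S : Type) [Fintype S] where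
  init : S
  trans : S → S → ℝ≥0
  trans_le_one : ∀ s s', trans s s' ≤ 1
  trans_sum_one : ∀ s, ∑ s', trans s s' = 1
  label : S → Set AP

namespace DTMC

variable {AP S : Type} [Fintype S]

/-- Paths of `M` starting in `s`. -/
def Path (M : DTMC AP S) (s : S) : Type :=
  { π : ℕ → S // π 0 = s ∧ ∀ n, 0 < M.trans (π n) (π (n + 1)) }

/-- Paths of `M` (with arbitrary first state). -/
def PathU (M : DTMC AP S) : Type :=
  { π : ℕ → S // ∀ n, 0 < M.trans (π n) (π (n + 1)) }

/-- Forget the start state of a path. -/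
def Path.toU {M : DTMC AP S} {s : S} (π : M.Path s) : M.PathU :=
  ⟨π.1, π.2.2⟩

/-- The suffix `π[n..]` of a path. -/
def PathU.suffix {M : DTMC AP S} (π : M.PathU) (n : ℕ) : M.PathU :=
  ⟨fun i => π.1 (n + i), fun i => π.2 (n + i)⟩

/-- `ρ 0, …, ρ n` is a path prefix of `M` starting in `s`. -/
def IsPrefix (M : DTMC AP S) (s : S) (ρ : ℕ → S) (n : ℕ) : Prop :=
  ρ 0 = s ∧ ∀ i < n, 0 < M.trans (ρ i) (ρ (i + 1))

/-- The cylinder set of the prefix `ρ 0, …, ρ n`: all paths starting in `s`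
that extend this prefix. -/
def Cyl (M : DTMC AP S) (s : S) (ρ : ℕ → S) (n : ℕ) : Set (M.Path s) :=
  { π | ∀ i ≤ n, π.1 i = ρ i }

/-- The σ-algebra on `Paths(M,s)` generated by the cylinder sets. -/
instance instMeasurableSpacePath (M : DTMC AP S) (s : S) : MeasurableSpace (M.Path s) :=
  .generateFrom { A | ∃ ρ n, M.IsPrefix s ρ n ∧ A = M.Cyl s ρ n }

/-- `μ` is a probability measure on `Paths(M,s)` giving each cylinder set the
product of the transition probabilities along its prefix. -/
def IsCylinderMeasure (M : DTMC AP S) (s : S) (μ : Measure (M.Path s)) : Prop :=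
  IsProbabilityMeasure μ ∧
    ∀ ρ n, M.IsPrefix s ρ n →
      μ (M.Cyl s ρ n) = ∏ j ∈ Finset.range n, (M.trans (ρ j) (ρ (j + 1)) : ℝ≥0∞)

/-- Paths staying in `S'` forever. -/
def Safe (M : DTMC AP S) (s : S) (S' : Set S) : Set (M.Path s) :=
  { π | ∀ n, π.1 n ∈ S' }

/-- Paths staying in `S'` from some point on (all but finitely many positions). -/
def CoBuchi (M : DTMC AP S) (s : S) (S' : Set S) : Set (M.Path s) :=
  { π | ∃ m, ∀ n, m ≤ n → π.1 n ∈ S' }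

/-- Paths visiting `S'` infinitely often. -/
def Buchi (M : DTMC AP S) (s : S) (S' : Set S) : Set (M.Path s) :=
  { π | ∀ m, ∃ n, m ≤ n ∧ π.1 n ∈ S' }

/-- Paths visiting `S'` at least once. -/
def Reach (M : DTMC AP S) (s : S) (S' : Set S) : Set (M.Path s) :=
  { π | ∃ n, π.1 n ∈ S' }

end DTMC

/-! ### Truth values -/

/-- Four-bit truth values `b₁b₂b₃b₄`. -/
structure TV where
  b1 : Bool
  b2 : Bool
  b3 : Bool
  b4 : Bool
deriving DecidableEq

namespace TV

/-- The truth value `1111`. -/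
def top : TV := ⟨true, true, true, true⟩

/-- The truth value `0000`. -/
def bot : TV := ⟨false, false, false, false⟩

instance : LE TV := ⟨fun v w => v.b1 ≤ w.b1 ∧ v.b2 ≤ w.b2 ∧ v.b3 ≤ w.b3 ∧ v.b4 ≤ w.b4⟩

instance : LT TV := ⟨fun v w => v ≤ w ∧ ¬w ≤ v⟩

/-- Minimum (bitwise). -/
def inf (v w : TV) : TV := ⟨v.b1 && w.b1, v.b2 && w.b2, v.b3 && w.b3, v.b4 && w.b4⟩

/-- Maximum (bitwise). -/
def sup (v w : TV) : TV := ⟨v.b1 || w.b1, v.b2 || w.b2, v.b3 || w.b3, v.b4 || w.b4⟩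

/-- `v` lies in `B4`, i.e. its bits are monotonically nondecreasing. -/
def InB4 (v : TV) : Prop := v.b1 ≤ v.b2 ∧ v.b2 ≤ v.b3 ∧ v.b3 ≤ v.b4

end TV

/-- The five truth values `1111 ≻ 0111 ≻ 0011 ≻ 0001 ≻ 0000`. -/
inductive B4 : Type
  | t1111 | t0111 | t0011 | t0001 | t0000
deriving DecidableEq

/-- The bit vector of an element of `B4`. -/
def B4.toTV : B4 → TV
  | .t1111 => ⟨true, true, true, true⟩
  | .t0111 => ⟨false, true, true, true⟩
  | .t0011 => ⟨false, false, true, true⟩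
  | .t0001 => ⟨false, false, false, true⟩
  | .t0000 => ⟨false, false, false, false⟩

/-- `v ⪰ t` for a truth value `v` and `t ∈ B4`: if `t` has `k` leading zeros,
then `v ⪰ t` is determined by bit `k+1` of `v`. -/
def TV.ge4 (v : TV) : B4 → Prop
  | .t1111 => v.b1 = true
  | .t0111 => v.b2 = true
  | .t0011 => v.b3 = true
  | .t0001 => v.b4 = true
  | .t0000 => True

/-- The Boolean truth value of a proposition. -/
noncomputable def boolOf (P : Prop) : Bool := @decide P (Classical.propDecidable P)

/-- Comparison operators `∼ ∈ {<, ≤, =, ≥, >}` for probability thresholds. -/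
inductive PCmp : Type
  | lt | le | eq | ge | gt

/-- `PCmp.holds c a b` expresses `a ∼ b`. -/
def PCmp.holds : PCmp → ℝ≥0∞ → ℝ≥0∞ → Prop
  | .lt, a, b => a < b
  | .le, a, b => a ≤ b
  | .eq, a, b => a = b
  | .ge, a, b => b ≤ a
  | .gt, a, b => b < a

/-- Rational probability thresholds `λ ∈ [0,1] ∩ ℚ`. -/
abbrev QProb : Type := Set.Icc (0 : ℚ) 1

/-- The threshold as an extended nonnegative real. -/
noncomputable def QProb.toENNReal (q : QProb) : ℝ≥0∞ := ENNReal.ofReal ((q : ℚ) : ℝ)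

/-! ### PCTL*(◊,□) and rPCTL*: shared syntax and semantics -/

mutual
/-- State formulas of PCTL*(◊,□) (equivalently, of rPCTL*):
`φ ::= p | ¬φ | φ∧φ | φ∨φ | φ→φ | P_{∼λ}[Φ]`. -/
inductive SF (AP : Type) : Type
  | atom : AP → SF AP
  | not : SF AP → SF AP
  | and : SF AP → SF AP → SF AP
  | or : SF AP → SF AP → SF AP
  | imp : SF AP → SF AP → SF AP
  | prob : PCmp → QProb → PFm AP → SF AP

/-- Path formulas of PCTL*(◊,□) (equivalently, of rPCTL*, whose temporal
operators are written with dots): `Φ ::= φ | ¬Φ | Φ∧Φ | Φ∨Φ | Φ→Φ | X Φ | ◊ Φ | □ Φ`. -/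
inductive PFm (AP : Type) : Type
  | state : SF AP → PFm AP
  | not : PFm AP → PFm AP
  | and : PFm AP → PFm AP → PFm AP
  | or : PFm AP → PFm AP → PFm AP
  | imp : PFm AP → PFm AP → PFm AP
  | next : PFm AP → PFm AP
  | ev : PFm AP → PFm AP
  | alw : PFm AP → PFm AP
end

mutual
/-- `φ` contains no implications. -/
def SF.NoImp {AP : Type} : SF AP → Prop
  | .atom _ => True
  | .not φ => φ.NoImp
  | .and φ ψ => φ.NoImp ∧ ψ.NoImp
  | .or φ ψ => φ.NoImp ∧ ψ.NoImp
  | .imp _ _ => False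
  | .prob _ _ Φ => Φ.NoImp

/-- `Φ` contains no implications. -/
def PFm.NoImp {AP : Type} : PFm AP → Prop
  | .state φ => φ.NoImp
  | .not Φ => Φ.NoImp
  | .and Φ Ψ => Φ.NoImp ∧ Ψ.NoImp
  | .or Φ Ψ => Φ.NoImp ∧ Ψ.NoImp
  | .imp _ _ => False
  | .next Φ => Φ.NoImp
  | .ev Φ => Φ.NoImp
  | .alw Φ => Φ.NoImp
end

mutual
/-- The standard PCTL* semantics `M,s ⊨ φ` for state formulas, relative to the
family of cylinder-set measures `μ s`. -/
def SF.Sat {AP S : Type} [Fintype S] (M : DTMC AP S)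
    (μ : ∀ s : S, MeasureTheory.Measure (M.Path s)) : SF AP → S → Prop
  | .atom p, s => p ∈ M.label s
  | .not φ, s => ¬ SF.Sat M μ φ s
  | .and φ ψ, s => SF.Sat M μ φ s ∧ SF.Sat M μ ψ s
  | .or φ ψ, s => SF.Sat M μ φ s ∨ SF.Sat M μ ψ s
  | .imp φ ψ, s => SF.Sat M μ φ s → SF.Sat M μ ψ s
  | .prob c l Φ, s => c.holds (μ s { π | PFm.Sat M μ Φ π.toU }) l.toENNReal

/-- The standard PCTL* (i.e. LTL) semantics `M,π ⊨ Φ` for path formulas. -/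
def PFm.Sat {AP S : Type} [Fintype S] (M : DTMC AP S)
    (μ : ∀ s : S, MeasureTheory.Measure (M.Path s)) : PFm AP → M.PathU → Prop
  | .state φ, π => SF.Sat M μ φ (π.1 0)
  | .not Φ, π => ¬ PFm.Sat M μ Φ π
  | .and Φ Ψ, π => PFm.Sat M μ Φ π ∧ PFm.Sat M μ Ψ π
  | .or Φ Ψ, π => PFm.Sat M μ Φ π ∨ PFm.Sat M μ Ψ π
  | .imp Φ Ψ, π => PFm.Sat M μ Φ π → PFm.Sat M μ Ψ π
  | .next Φ, π => PFm.Sat M μ Φ (π.suffix 1)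
  | .ev Φ, π => ∃ n, PFm.Sat M μ Φ (π.suffix n)
  | .alw Φ, π => ∀ n, PFm.Sat M μ Φ (π.suffix n)
end

/-- The maximum of a set of truth values from `B4` (the least value `0000`
if the set is empty). -/
noncomputable def maxB4 (A : Set B4) : B4 :=
  if B4.t1111 ∈ A then .t1111
  else if B4.t0111 ∈ A then .t0111
  else if B4.t0011 ∈ A then .t0011
  else if B4.t0001 ∈ A then .t0001
  else .t0000

mutual
/-- The rPCTL* evaluation function `V_M` on state formulas, relative to the
family of cylinder-set measures `μ s`. -/
noncomputable def SF.val {AP S : Type} [Fintype S] (M : DTMC AP S)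
    (μ : ∀ s : S, MeasureTheory.Measure (M.Path s)) : SF AP → S → TV
  | .atom p, s => if p ∈ M.label s then TV.top else TV.bot
  | .not φ, s => if SF.val M μ φ s = TV.top then TV.bot else TV.top
  | .and φ ψ, s => (SF.val M μ φ s).inf (SF.val M μ ψ s)
  | .or φ ψ, s => (SF.val M μ φ s).sup (SF.val M μ ψ s)
  | .imp φ ψ, s =>
      if SF.val M μ φ s ≤ SF.val M μ ψ s then TV.top else SF.val M μ ψ s
  | .prob c l Φ, s =>
      (maxB4 { b | c.holds (μ s { π | (PFm.val M μ Φ π.toU).ge4 b }) l.toENNReal }).toTV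

/-- The rPCTL* evaluation function `V_M` on path formulas. -/
noncomputable def PFm.val {AP S : Type} [Fintype S] (M : DTMC AP S)
    (μ : ∀ s : S, MeasureTheory.Measure (M.Path s)) : PFm AP → M.PathU → TV
  | .state φ, π => SF.val M μ φ (π.1 0)
  | .not Φ, π => if PFm.val M μ Φ π = TV.top then TV.bot else TV.top
  | .and Φ Ψ, π => (PFm.val M μ Φ π).inf (PFm.val M μ Ψ π)
  | .or Φ Ψ, π => (PFm.val M μ Φ π).sup (PFm.val M μ Ψ π)
  | .imp Φ Ψ, π =>
      if PFm.val M μ Φ π ≤ PFm.val M μ Ψ π then TV.top else PFm.val M μ Ψ π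
  | .next Φ, π => PFm.val M μ Φ (π.suffix 1)
  | .ev Φ, π =>
      ⟨boolOf (∃ n, (PFm.val M μ Φ (π.suffix n)).b1 = true),
       boolOf (∃ n, (PFm.val M μ Φ (π.suffix n)).b2 = true),
       boolOf (∃ n, (PFm.val M μ Φ (π.suffix n)).b3 = true),
       boolOf (∃ n, (PFm.val M μ Φ (π.suffix n)).b4 = true)⟩
  | .alw Φ, π =>
      ⟨boolOf (∀ n, (PFm.val M μ Φ (π.suffix n)).b1 = true),
       boolOf (∃ m, ∀ n, m ≤ n → (PFm.val M μ Φ (π.suffix n)).b2 = true),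
       boolOf (∀ m, ∃ n, m ≤ n ∧ (PFm.val M μ Φ (π.suffix n)).b3 = true),
       boolOf (∃ n, (PFm.val M μ Φ (π.suffix n)).b4 = true)⟩
end


/-! ### Auxiliary lemmas for measurability -/

section AuxMeas

open DTMC

/-- The `k`-th bit of a truth value. -/
def bit4 : Fin 4 → TV → Bool
  | ⟨0, _⟩, v => v.b1
  | ⟨1, _⟩, v => v.b2
  | ⟨2, _⟩, v => v.b3
  | ⟨3, _⟩, v => v.b4

lemma bit4_top (k : Fin 4) : bit4 k TV.top = true := by
  fin_cases k <;> rfl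

lemma bit4_bot (k : Fin 4) : bit4 k TV.bot = false := by
  fin_cases k <;> rfl

lemma bit4_inf (k : Fin 4) (v w : TV) : bit4 k (v.inf w) = (bit4 k v && bit4 k w) := by
  fin_cases k <;> rfl

lemma bit4_sup (k : Fin 4) (v w : TV) : bit4 k (v.sup w) = (bit4 k v || bit4 k w) := by
  fin_cases k <;> rfl

lemma TV.eq_top_iff (v : TV) : v = TV.top ↔ ∀ k : Fin 4, bit4 k v = true := by
  constructor
  · rintro rfl k; exact bit4_top k
  · intro h
    cases v
    have h0 := h ⟨0, by norm_num⟩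
    have h1 := h ⟨1, by norm_num⟩
    have h2 := h ⟨2, by norm_num⟩
    have h3 := h ⟨3, by norm_num⟩
    simp only [bit4] at h0 h1 h2 h3
    simp [TV.top, h0, h1, h2, h3]

lemma TV.le_iff' (v w : TV) : v ≤ w ↔ ∀ k : Fin 4, bit4 k v = true → bit4 k w = true := by
  constructor
  · rintro ⟨h1, h2, h3, h4⟩ k
    fin_cases k
    · exact fun hv => Bool.le_iff_imp.mp h1 hv
    · exact fun hv => Bool.le_iff_imp.mp h2 hv
    · exact fun hv => Bool.le_iff_imp.mp h3 hv
    · exact fun hv => Bool.le_iff_imp.mp h4 hv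
  · intro h
    exact ⟨Bool.le_iff_imp.mpr (h ⟨0, by norm_num⟩), Bool.le_iff_imp.mpr (h ⟨1, by norm_num⟩),
      Bool.le_iff_imp.mpr (h ⟨2, by norm_num⟩), Bool.le_iff_imp.mpr (h ⟨3, by norm_num⟩)⟩

lemma boolOf_eq_true (P : Prop) : boolOf P = true ↔ P := by
  simp [boolOf]

lemma PathU.suffix_suffix {AP S : Type} [Fintype S] {M : DTMC AP S}
    (π : M.PathU) (a b : ℕ) : (π.suffix a).suffix b = π.suffix (a + b) :=
  Subtype.ext (funext fun i => congrArg π.1 (Nat.add_assoc a b i).symm)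

lemma PathU.suffix_zero {AP S : Type} [Fintype S] {M : DTMC AP S}
    (π : M.PathU) : π.suffix 0 = π :=
  Subtype.ext (funext fun i => congrArg π.1 (Nat.zero_add i))

lemma cyl_measurable {AP S : Type} [Fintype S] (M : DTMC AP S) (s : S) (ρ : ℕ → S) (n : ℕ) :
    MeasurableSet (M.Cyl s ρ n) := by
  rcases Set.eq_empty_or_nonempty (M.Cyl s ρ n) with h | ⟨π, hπ⟩
  · rw [h]; exact MeasurableSet.empty
  · apply MeasurableSpace.measurableSet_generateFrom
    refine ⟨ρ, n, ⟨?_, ?_⟩, rfl⟩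
    · rw [← hπ 0 (Nat.zero_le n)]; exact π.2.1
    · intro i hi
      rw [← hπ i (le_of_lt hi), ← hπ (i + 1) hi]
      exact π.2.2 i

lemma coord_measurable {AP S : Type} [Fintype S] (M : DTMC AP S) (s : S) (n : ℕ) (P : S → Prop) :
    MeasurableSet {π : M.Path s | P (π.1 n)} := by
  have hkey : {π : M.Path s | P (π.1 n)} =
      ⋃ (ρ : Fin (n + 1) → S),
        if P (ρ ⟨n, Nat.lt_succ_self n⟩)
        then M.Cyl s (fun i => if h : i < n + 1 then ρ ⟨i, h⟩ else ρ ⟨n, Nat.lt_succ_self n⟩) n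
        else ∅ := by
    ext π
    simp only [Set.mem_setOf_eq, Set.mem_iUnion]
    constructor
    · intro h
      refine ⟨fun i => π.1 i.1, ?_⟩
      rw [if_pos h]
      intro i hi
      simp [Nat.lt_succ_of_le hi, DTMC.Cyl]
    · rintro ⟨ρ, hρ⟩
      by_cases hp : P (ρ ⟨n, Nat.lt_succ_self n⟩)
      · rw [if_pos hp] at hρ
        have h2 := hρ n le_rfl
        simp only [Nat.lt_succ_self, dif_pos] at h2
        rw [h2]; exact hp
      · rw [if_neg hp] at hρ; exact hρ.elim
  rw [hkey]
  refine MeasurableSet.iUnion fun ρ => ?_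
  split
  · exact cyl_measurable M s _ n
  · exact MeasurableSet.empty

/-- Key lemma: all bit sets of `V_M(π[n..], Φ)` are measurable. -/
lemma bit_measurable {AP S : Type} [Fintype S] (M : DTMC AP S)
    (μ : ∀ s : S, MeasureTheory.Measure (M.Path s)) (s : S) :
    ∀ (Φ : PFm AP) (n : ℕ) (k : Fin 4),
      MeasurableSet {π : M.Path s | bit4 k (PFm.val M μ Φ (π.toU.suffix n)) = true}
  | .state φ, n, k => by
      simp only [PFm.val]
      exact coord_measurable M s n (fun s' => bit4 k (SF.val M μ φ s') = true)
  | .not Φ, n, k => by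
      have ih : ∀ (n : ℕ) (k : Fin 4),
          MeasurableSet {π : M.Path s | bit4 k (PFm.val M μ Φ (π.toU.suffix n)) = true} :=
        bit_measurable M μ s Φ
      simp only [PFm.val]
      have hset : {π : M.Path s |
            bit4 k (if PFm.val M μ Φ (π.toU.suffix n) = TV.top then TV.bot else TV.top) = true}
          = (⋂ j : Fin 4, {π : M.Path s | bit4 j (PFm.val M μ Φ (π.toU.suffix n)) = true})ᶜ := by
        ext π
        by_cases h : PFm.val M μ Φ (π.toU.suffix n) = TV.top
        · simp [h, bit4_bot, bit4_top, Set.mem_iInter]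
        · simp only [Set.mem_setOf_eq, if_neg h, bit4_top, Set.mem_compl_iff, Set.mem_iInter]
          simp only [true_iff]
          intro hall
          exact h ((TV.eq_top_iff _).mpr hall)
      rw [hset]
      exact (MeasurableSet.iInter fun j => ih n j).compl
  | .and Φ Ψ, n, k => by
      have ihΦ := bit_measurable M μ s Φ
      have ihΨ := bit_measurable M μ s Ψ
      simp only [PFm.val]
      have hset : {π : M.Path s |
            bit4 k ((PFm.val M μ Φ (π.toU.suffix n)).inf (PFm.val M μ Ψ (π.toU.suffix n))) = true}
          = {π : M.Path s | bit4 k (PFm.val M μ Φ (π.toU.suffix n)) = true} ∩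
            {π : M.Path s | bit4 k (PFm.val M μ Ψ (π.toU.suffix n)) = true} := by
        ext π; simp [bit4_inf]
      rw [hset]
      exact (ihΦ n k).inter (ihΨ n k)
  | .or Φ Ψ, n, k => by
      have ihΦ := bit_measurable M μ s Φ
      have ihΨ := bit_measurable M μ s Ψ
      simp only [PFm.val]
      have hset : {π : M.Path s |
            bit4 k ((PFm.val M μ Φ (π.toU.suffix n)).sup (PFm.val M μ Ψ (π.toU.suffix n))) = true}
          = {π : M.Path s | bit4 k (PFm.val M μ Φ (π.toU.suffix n)) = true} ∪
            {π : M.Path s | bit4 k (PFm.val M μ Ψ (π.toU.suffix n)) = true} := by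
        ext π; simp [bit4_sup]
      rw [hset]
      exact (ihΦ n k).union (ihΨ n k)
  | .imp Φ Ψ, n, k => by
      have ihΦ := bit_measurable M μ s Φ
      have ihΨ := bit_measurable M μ s Ψ
      simp only [PFm.val]
      have hle : {π : M.Path s |
            PFm.val M μ Φ (π.toU.suffix n) ≤ PFm.val M μ Ψ (π.toU.suffix n)}
          = ⋂ j : Fin 4, ({π : M.Path s | bit4 j (PFm.val M μ Φ (π.toU.suffix n)) = true}ᶜ ∪
              {π : M.Path s | bit4 j (PFm.val M μ Ψ (π.toU.suffix n)) = true}) := by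
        ext π
        simp only [Set.mem_setOf_eq, Set.mem_iInter, Set.mem_union, Set.mem_compl_iff,
          TV.le_iff']
        constructor
        · intro h j
          by_cases hj : bit4 j (PFm.val M μ Φ (π.toU.suffix n)) = true
          · exact Or.inr (h j hj)
          · exact Or.inl hj
        · intro h j hj
          rcases h j with h' | h'
          · exact absurd hj h'
          · exact h'
      have hlemeas : MeasurableSet {π : M.Path s |
            PFm.val M μ Φ (π.toU.suffix n) ≤ PFm.val M μ Ψ (π.toU.suffix n)} := by
        rw [hle]
        exact MeasurableSet.iInter fun j => ((ihΦ n j).compl.union (ihΨ n j))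
      have hset : {π : M.Path s |
            bit4 k (if PFm.val M μ Φ (π.toU.suffix n) ≤ PFm.val M μ Ψ (π.toU.suffix n)
              then TV.top else PFm.val M μ Ψ (π.toU.suffix n)) = true}
          = {π : M.Path s |
              PFm.val M μ Φ (π.toU.suffix n) ≤ PFm.val M μ Ψ (π.toU.suffix n)} ∪
            {π : M.Path s | bit4 k (PFm.val M μ Ψ (π.toU.suffix n)) = true} := by
        ext π
        simp only [Set.mem_setOf_eq, Set.mem_union]
        by_cases h : PFm.val M μ Φ (π.toU.suffix n) ≤ PFm.val M μ Ψ (π.toU.suffix n)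
        · simp [h, bit4_top]
        · simp [h]
      rw [hset]
      exact hlemeas.union (ihΨ n k)
  | .next Φ, n, k => by
      have ih := bit_measurable M μ s Φ
      simp only [PFm.val, PathU.suffix_suffix]
      exact ih (n + 1) k
  | .ev Φ, n, k => by
      simp only [PFm.val]
      fin_cases k
      · convert MeasurableSet.iUnion (fun m : ℕ => bit_measurable M μ s Φ (n + m) ⟨0, by norm_num⟩) using 1
        ext π
        simp only [Set.mem_setOf_eq, Set.mem_iUnion, bit4, boolOf_eq_true, PathU.suffix_suffix]
      · convert MeasurableSet.iUnion (fun m : ℕ => bit_measurable M μ s Φ (n + m) ⟨1, by norm_num⟩) using 1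
        ext π
        simp only [Set.mem_setOf_eq, Set.mem_iUnion, bit4, boolOf_eq_true, PathU.suffix_suffix]
      · convert MeasurableSet.iUnion (fun m : ℕ => bit_measurable M μ s Φ (n + m) ⟨2, by norm_num⟩) using 1
        ext π
        simp only [Set.mem_setOf_eq, Set.mem_iUnion, bit4, boolOf_eq_true, PathU.suffix_suffix]
      · convert MeasurableSet.iUnion (fun m : ℕ => bit_measurable M μ s Φ (n + m) ⟨3, by norm_num⟩) using 1
        ext π
        simp only [Set.mem_setOf_eq, Set.mem_iUnion, bit4, boolOf_eq_true, PathU.suffix_suffix]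
  | .alw Φ, n, k => by
      simp only [PFm.val]
      fin_cases k
      · convert MeasurableSet.iInter (fun m : ℕ => bit_measurable M μ s Φ (n + m) ⟨0, by norm_num⟩) using 1
        ext π
        simp only [Set.mem_setOf_eq, Set.mem_iInter, bit4, boolOf_eq_true, PathU.suffix_suffix]
      · convert MeasurableSet.iUnion (fun m : ℕ => MeasurableSet.iInter fun j : ℕ =>
            MeasurableSet.iInter fun _ : m ≤ j =>
              bit_measurable M μ s Φ (n + j) ⟨1, by norm_num⟩) using 1
        ext π
        simp only [Set.mem_setOf_eq, Set.mem_iUnion, Set.mem_iInter, exists_prop, bit4, boolOf_eq_true,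
          PathU.suffix_suffix]
      · convert MeasurableSet.iInter (fun m : ℕ => MeasurableSet.iUnion fun j : ℕ =>
            MeasurableSet.iUnion fun _ : m ≤ j =>
              bit_measurable M μ s Φ (n + j) ⟨2, by norm_num⟩) using 1
        ext π
        simp only [Set.mem_setOf_eq, Set.mem_iUnion, Set.mem_iInter, exists_prop, bit4, boolOf_eq_true,
          PathU.suffix_suffix]
      · convert MeasurableSet.iUnion (fun m : ℕ => bit_measurable M μ s Φ (n + m) ⟨3, by norm_num⟩) using 1
        ext π
        simp only [Set.mem_setOf_eq, Set.mem_iUnion, bit4, boolOf_eq_true, PathU.suffix_suffix]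

end AuxMeas

/-- For every DTMC `M`, state `s`, rPCTL* path formula `Φ`,
and truth value `t ∈ B4`, the set `{π ∈ Paths(M,s) : V_M(π, Φ) ⪰ t}` is
measurable w.r.t. the σ-algebra generated by the cylinder sets (so the
semantics of the probabilistic operator is well defined). -/
theorem rpctlstar_path_value_set_measurable {AP S : Type} [Fintype S]
    (M : DTMC AP S) (μ : ∀ s : S, MeasureTheory.Measure (M.Path s))
    (hμ : ∀ s : S, M.IsCylinderMeasure s (μ s))
    (s : S) (Φ : PFm AP) (t : B4) :
    MeasurableSet { π : M.Path s | (PFm.val M μ Φ π.toU).ge4 t } := by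
  have hsz : ∀ π : M.Path s, π.toU = π.toU.suffix 0 := fun π => (PathU.suffix_zero _).symm
  cases t
  · have hset : { π : M.Path s | (PFm.val M μ Φ π.toU).ge4 .t1111 }
        = {π : M.Path s | bit4 ⟨0, by norm_num⟩ (PFm.val M μ Φ (π.toU.suffix 0)) = true} := by
      ext π; simp only [Set.mem_setOf_eq]; rw [← hsz π]; exact Iff.rfl
    rw [hset]; exact bit_measurable M μ s Φ 0 _
  · have hset : { π : M.Path s | (PFm.val M μ Φ π.toU).ge4 .t0111 }
        = {π : M.Path s | bit4 ⟨1, by norm_num⟩ (PFm.val M μ Φ (π.toU.suffix 0)) = true} := by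
      ext π; simp only [Set.mem_setOf_eq]; rw [← hsz π]; exact Iff.rfl
    rw [hset]; exact bit_measurable M μ s Φ 0 _
  · have hset : { π : M.Path s | (PFm.val M μ Φ π.toU).ge4 .t0011 }
        = {π : M.Path s | bit4 ⟨2, by norm_num⟩ (PFm.val M μ Φ (π.toU.suffix 0)) = true} := by
      ext π; simp only [Set.mem_setOf_eq]; rw [← hsz π]; exact Iff.rfl
    rw [hset]; exact bit_measurable M μ s Φ 0 _
  · have hset : { π : M.Path s | (PFm.val M μ Φ π.toU).ge4 .t0001 }
        = {π : M.Path s | bit4 ⟨3, by norm_num⟩ (PFm.val M μ Φ (π.toU.suffix 0)) = true} := by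
      ext π; simp only [Set.mem_setOf_eq]; rw [← hsz π]; exact Iff.rfl
    rw [hset]; exact bit_measurable M μ s Φ 0 _
  · exact MeasurableSet.univ
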